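/- If p < 0.25, then the projection of the random Menger sponge onto the x-axis, proj_{(1,0,0)}(M_p), almost surely contains no nonempty open interval. -/

import Mathlib

open MeasureTheory ProbabilityTheory Set ENNReal

/-- The lower-left corners of the seven level-one cubes removed in the construction of the
Menger sponge. -/
def removedVecs : Set (Fin 3 → ℝ) :=
  {![1/3, 1/3, 0], ![1/3, 0, 1/3], ![0, 1/3, 1/3], ![1/3, 1/3, 2/3],
    ![1/3, 2/3, 1/3], ![2/3, 1/3, 1/3], ![1/3, 1/3, 1/3]}

/-- The 20 translation vectors of the Menger sponge IFS:
`{0, 1/3, 2/3}³` minus the seven removed vectors. -/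
def mengerVecs : Set (Fin 3 → ℝ) :=
  {v | ∀ i, v i ∈ ({0, 1/3, 2/3} : Set ℝ)} \ removedVecs

/-- The composition `f_{i₁} ∘ ⋯ ∘ f_{iₙ}` along the word `w`, for the IFS
`f_i(x) = x/3 + t i` on `ℝ³`. -/
noncomputable def wordMap3 (t : Fin 20 → Fin 3 → ℝ) (w : List (Fin 20)) (x : Fin 3 → ℝ) : Fin 3 → ℝ :=
  w.foldr (fun i y => fun j => y j / 3 + t i j) x

/-- A node of the `20`-ary tree is retained (for the realization `ω`) if it and all of
its ancestors carry the label `true`. -/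
def retained {Ω : Type*} (label : List (Fin 20) → Ω → Bool) (ω : Ω)
    (w : List (Fin 20)) : Prop :=
  ∀ v : List (Fin 20), v <+: w → label v ω = true

/-- The random Menger sponge:
`M_p = ⋂_{n ≥ 1} ⋃_{w ∈ E_n} f_w ([0,1]³)` where `E_n` is the set of retained level-`n`
words. -/
noncomputable def mengerSet (t : Fin 20 → Fin 3 → ℝ) {Ω : Type*}
    (label : List (Fin 20) → Ω → Bool) (ω : Ω) : Set (Fin 3 → ℝ) :=
  ⋂ (n : ℕ), ⋂ (_ : 1 ≤ n),
    ⋃ (w : List (Fin 20)) (_ : w.length = n) (_ : retained label ω w),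
      wordMap3 t w '' Set.Icc (0 : Fin 3 → ℝ) 1

/-- The projection `proj_{(a,b,c)}(x,y,z) = ax + by + cz`. -/
noncomputable def proj3 (a b c : ℝ) (v : Fin 3 → ℝ) : ℝ := a * v 0 + b * v 1 + c * v 2

/-! An open interval contains a triadic centre `z = (K + 1/2) / 3^m`. The first coordinates of
the translations are ternary digits, and `z` lies in the `x`-projection of a level-`n` cube only
if every digit of its word after position `m` is the middle digit `1/3`, which only `4` of the
`20` maps have. So `z ∈ proj(M_p)` needs, for every `k`, one of at most `20^m 4^k` words of length
`m + k` to be retained, each with probability `p^(m+k+1)`; the bound `20^m p^(m+1) (4p)^k` tends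
to `0` for `p < 1/4`. Intervals with rational endpoints are countable, so all of them can be
handled at once. -/

theorem List.nodup_inits {α : Type*} (l : List α) : l.inits.Nodup := by
  induction l with
  | nil => simp
  | cons a l ih =>
    rw [List.inits_cons]
    exact List.nodup_cons.2 ⟨by simp, ih.map List.cons_injective⟩

theorem List.exists_eq_ofFn_of_forall_mem {α : Type*} {s : Finset α} {l : List α} {n : ℕ}
    (hl : l.length = n) (h : ∀ x ∈ l, x ∈ s) :
    ∃ f : Fin n → s, l = List.ofFn (fun j => (f j : α)) := by
  subst hl
  exact ⟨fun j => ⟨l[j], h _ (List.getElem_mem _)⟩, List.ofFn_getElem.symm⟩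

section TernaryMap

variable {ι : Type*} (d : ι → ℝ)

noncomputable def ternaryMap (w : List ι) (s : ℝ) : ℝ :=
  w.foldr (fun i y => y / 3 + d i) s

theorem ternaryMap_cons (i : ι) (w : List ι) (s : ℝ) :
    ternaryMap d (i :: w) s = ternaryMap d w s / 3 + d i := rfl

variable {d} (hd : ∀ i, d i = 0 ∨ d i = 1/3 ∨ d i = 2/3)
include hd

theorem ternaryMap_mem_Icc (w : List ι) {s : ℝ} (hs : s ∈ Icc (0 : ℝ) 1) :
    ternaryMap d w s ∈ Icc (0 : ℝ) 1 := by
  induction w with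
  | nil => exact hs
  | cons i w ih =>
    obtain ⟨h0, h1⟩ := ih
    rw [ternaryMap_cons, mem_Icc]
    rcases hd i with h | h | h <;> rw [h] <;> constructor <;> linarith

theorem forall_mem_drop_eq_third_of_ternaryMap_eq (w : List ι) {s : ℝ} (hs : s ∈ Icc (0 : ℝ) 1)
    (m : ℕ) (K : ℤ) (h : ternaryMap d w s = (K + 1/2) / 3 ^ m) : ∀ i ∈ w.drop m, d i = 1/3 := by
  induction w generalizing m K with
  | nil => simp
  | cons i w ih =>
    obtain ⟨hy0, hy1⟩ := ternaryMap_mem_Icc hd w hs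
    have hdi : 0 ≤ d i ∧ d i ≤ 2/3 := by rcases hd i with hi | hi | hi <;> rw [hi] <;> norm_num
    rw [ternaryMap_cons] at h
    cases m with
    | zero =>
      rw [pow_zero, div_one] at h
      have hK : K = 0 := by
        have hlo : (-1 : ℝ) < K := by linarith
        have hhi : (K : ℝ) < 1 := by linarith
        have : (-1 : ℤ) < K ∧ K < 1 := ⟨by exact_mod_cast hlo, by exact_mod_cast hhi⟩
        omega
      subst hK
      have hi : d i = 1/3 := by
        rcases hd i with hi | hi | hi
        · rw [hi] at h; norm_num at h; linarith
        · exact hi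
        · rw [hi] at h; norm_num at h; linarith
      have hw : ternaryMap d w s = ((0 : ℤ) + 1/2) / 3 ^ 0 := by
        rw [hi] at h; push_cast at h ⊢; linarith
      rw [List.drop_zero, List.forall_mem_cons]
      exact ⟨hi, by simpa only [List.drop_zero] using ih 0 0 hw⟩
    | succ m =>
      -- the digit `d i = j / 3` shifts the numerator by the integer `j * 3 ^ m`
      obtain ⟨j, hj⟩ : ∃ j : ℤ, d i = j / 3 := by
        rcases hd i with hi | hi | hi
        exacts [⟨0, by simp [hi]⟩, ⟨1, by simp [hi]⟩, ⟨2, by norm_num [hi]⟩]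
      refine ih m (K - j * 3 ^ m) ?_
      rw [hj, pow_succ] at h
      push_cast
      field_simp at h ⊢
      linarith

end TernaryMap

theorem wordMap3_apply_zero (t : Fin 20 → Fin 3 → ℝ) (w : List (Fin 20)) (x : Fin 3 → ℝ) :
    wordMap3 t w x 0 = ternaryMap (fun i => t i 0) w (x 0) := by
  induction w with
  | nil => rfl
  | cons i w ih => simp only [wordMap3, List.foldr_cons] at ih ⊢; rw [ih]; rfl

theorem mengerVecs_apply_zero {v : Fin 3 → ℝ} (hv : v ∈ mengerVecs) :
    v 0 = 0 ∨ v 0 = 1/3 ∨ v 0 = 2/3 := by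
  simpa using hv.1 0

theorem mengerVecs_middle_subset :
    {v ∈ mengerVecs | v 0 = 1/3} ⊆
      {![1/3, 0, 0], ![1/3, 2/3, 0], ![1/3, 0, 2/3], ![1/3, 2/3, 2/3]} := by
  rintro v ⟨⟨hall, hnot⟩, h0⟩
  obtain ⟨a, b, c, rfl⟩ : ∃ a b c : ℝ, v = ![a, b, c] :=
    ⟨v 0, v 1, v 2, by ext i; fin_cases i <;> rfl⟩
  obtain rfl : a = 1/3 := h0
  revert hnot
  rcases hall 1 with rfl | rfl | rfl <;> rcases hall 2 with rfl | rfl | rfl <;>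
    norm_num [removedVecs]

theorem card_filter_apply_zero_eq_third_le_four {t : Fin 20 → Fin 3 → ℝ}
    (htinj : Function.Injective t) (htrange : Set.range t = mengerVecs) :
    (Finset.univ.filter fun i => t i 0 = 1/3).card ≤ 4 := by
  refine (Finset.card_le_card_of_injOn t (t := {![1/3, 0, 0], ![1/3, 2/3, 0], ![1/3, 0, 2/3],
    ![1/3, 2/3, 2/3]}) (fun i hi => ?_) htinj.injOn).trans Finset.card_le_four
  simpa using mengerVecs_middle_subset ⟨htrange ▸ mem_range_self i, (Finset.mem_filter.1 hi).2⟩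

section Retained

variable {Ω : Type*} [MeasurableSpace Ω] {P : Measure Ω} {label : List (Fin 20) → Ω → Bool}
  {p : ℝ}

theorem measure_retained (hindep : iIndepFun label P)
    (hbern : ∀ w : List (Fin 20), P {ω | label w ω = true} = ENNReal.ofReal p)
    (w : List (Fin 20)) :
    P {ω | retained label ω w} = ENNReal.ofReal p ^ (w.length + 1) := by
  have hset : {ω | retained label ω w} = ⋂ v ∈ w.inits.toFinset, {ω | label v ω = true} := by
    ext ω; simp [retained, List.mem_inits]
  rw [hset, hindep.meas_biInter (s := fun v => {ω | label v ω = true})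
      fun v _ => ⟨{true}, trivial, rfl⟩,
    Finset.prod_congr rfl fun v _ => hbern v, Finset.prod_const,
    List.toFinset_card_of_nodup w.nodup_inits, List.length_inits]

theorem measure_exists_retained_drop_mem_le (hindep : iIndepFun label P)
    (hbern : ∀ w : List (Fin 20), P {ω | label w ω = true} = ENNReal.ofReal p)
    (A : Finset (Fin 20)) (m k : ℕ) :
    P {ω | ∃ w : List (Fin 20), w.length = m + k ∧ retained label ω w ∧ ∀ i ∈ w.drop m, i ∈ A}
      ≤ 20 ^ m * A.card ^ k * ENNReal.ofReal p ^ (m + k + 1) := by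
  calc P {ω | ∃ w : List (Fin 20), w.length = m + k ∧ retained label ω w ∧ ∀ i ∈ w.drop m, i ∈ A}
      ≤ P (⋃ (u : Fin m → Fin 20) (v : Fin k → A),
          {ω | retained label ω (List.ofFn u ++ List.ofFn (fun j => (v j : Fin 20)))}) := by
        refine measure_mono fun ω ⟨w, hlen, hret, hA⟩ => ?_
        obtain ⟨u, hu⟩ := List.exists_eq_ofFn_of_forall_mem (s := Finset.univ) (l := w.take m)
          (n := m) (by simp [hlen]) fun _ _ => Finset.mem_univ _
        obtain ⟨v, hv⟩ := List.exists_eq_ofFn_of_forall_mem (l := w.drop m) (n := k)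
          (by simp [hlen]) hA
        simp only [mem_iUnion]
        exact ⟨fun j => u j, v, by rwa [← hu, ← hv, List.take_append_drop]⟩
    _ ≤ ∑ u : Fin m → Fin 20, ∑ v : Fin k → A,
          P {ω | retained label ω (List.ofFn u ++ List.ofFn (fun j => (v j : Fin 20)))} :=
        (measure_iUnion_fintype_le _ _).trans
          (Finset.sum_le_sum fun _ _ => measure_iUnion_fintype_le _ _)
    _ = 20 ^ m * A.card ^ k * ENNReal.ofReal p ^ (m + k + 1) := by
        simp [measure_retained hindep hbern, Finset.card_univ]
        ring

end Retained

theorem exists_triadic_center_mem_Ioo {q r : ℝ} (hqr : q < r) :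
    ∃ (m : ℕ) (K : ℤ), ((K : ℝ) + 1/2) / 3 ^ m ∈ Ioo q r := by
  obtain ⟨m, hm⟩ := pow_unbounded_of_one_lt (1 / (r - q)) (by norm_num : (1 : ℝ) < 3)
  have h3 : (0 : ℝ) < 3 ^ m := by positivity
  have hm' : 1 < (r - q) * 3 ^ m := by rwa [div_lt_iff₀ (sub_pos.2 hqr), mul_comm] at hm
  refine ⟨m, ⌊q * 3 ^ m + 1/2⌋, ?_, ?_⟩
  · rw [lt_div_iff₀ h3]; linarith [Int.lt_floor_add_one (q * 3 ^ m + 1/2)]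
  · rw [div_lt_iff₀ h3]; linarith [Int.floor_le (q * 3 ^ m + 1/2)]

section MengerSet

variable {t : Fin 20 → Fin 3 → ℝ} {Ω : Type*} {label : List (Fin 20) → Ω → Bool}

theorem exists_retained_forall_mem_drop_of_mem_proj
    (hd : ∀ i, t i 0 = 0 ∨ t i 0 = 1/3 ∨ t i 0 = 2/3) {ω : Ω} {m : ℕ} {K : ℤ}
    (hz : ((K : ℝ) + 1/2) / 3 ^ m ∈ proj3 1 0 0 '' mengerSet t label ω) {n : ℕ} (hn : 1 ≤ n) :
    ∃ w : List (Fin 20), w.length = n ∧ retained label ω w ∧ ∀ i ∈ w.drop m, t i 0 = 1/3 := by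
  obtain ⟨v, hv, hvz⟩ := hz
  simp only [mengerSet, mem_iInter, mem_iUnion] at hv
  obtain ⟨w, hlen, hret, x, hx, rfl⟩ := hv n hn
  refine ⟨w, hlen, hret,
    forall_mem_drop_eq_third_of_ternaryMap_eq hd w ⟨hx.1 0, hx.2 0⟩ m K ?_⟩
  rw [← wordMap3_apply_zero, ← hvz, proj3]
  ring

theorem measure_Ioo_subset_proj_mengerSet_eq_zero (htinj : Function.Injective t)
    (htrange : Set.range t = mengerVecs) {p : ℝ} (hp : p < (0.25 : ℝ)) [MeasurableSpace Ω]
    {P : Measure Ω} (hindep : iIndepFun label P)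
    (hbern : ∀ w : List (Fin 20), P {ω | label w ω = true} = ENNReal.ofReal p)
    {q r : ℝ} (hqr : q < r) :
    P {ω | Ioo q r ⊆ proj3 1 0 0 '' mengerSet t label ω} = 0 := by
  have hd i : t i 0 = 0 ∨ t i 0 = 1/3 ∨ t i 0 = 2/3 :=
    mengerVecs_apply_zero (htrange ▸ mem_range_self i)
  set A := Finset.univ.filter fun i => t i 0 = 1/3
  obtain ⟨m, K, hz⟩ := exists_triadic_center_mem_Ioo hqr
  set C := 20 ^ m * ENNReal.ofReal p ^ (m + 1)
  have hle (k : ℕ) : P {ω | Ioo q r ⊆ proj3 1 0 0 '' mengerSet t label ω}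
      ≤ C * (4 * ENNReal.ofReal p) ^ (k + 1) := calc
    _ ≤ P {ω | ∃ w : List (Fin 20), w.length = m + (k + 1) ∧ retained label ω w ∧
          ∀ i ∈ w.drop m, i ∈ A} := measure_mono fun ω hω => by
        obtain ⟨w, hlen, hret, hmid⟩ :=
          exists_retained_forall_mem_drop_of_mem_proj hd (hω hz) (n := m + (k + 1)) (by omega)
        exact ⟨w, hlen, hret, fun i hi => Finset.mem_filter.2 ⟨Finset.mem_univ i, hmid i hi⟩⟩
    _ ≤ 20 ^ m * A.card ^ (k + 1) * ENNReal.ofReal p ^ (m + (k + 1) + 1) :=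
        measure_exists_retained_drop_mem_le hindep hbern A m (k + 1)
    _ ≤ 20 ^ m * 4 ^ (k + 1) * ENNReal.ofReal p ^ (m + (k + 1) + 1) := by
        gcongr
        exact_mod_cast card_filter_apply_zero_eq_third_le_four htinj htrange
    _ = C * (4 * ENNReal.ofReal p) ^ (k + 1) := by ring
  have hρ : 4 * ENNReal.ofReal p < 1 := by
    rw [← ENNReal.ofReal_ofNat 4, ← ENNReal.ofReal_mul (by norm_num)]
    exact ENNReal.ofReal_lt_one.2 (by norm_num at hp; linarith)
  have hC : C ≠ ⊤ := by finiteness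
  have htend : Filter.Tendsto (fun k : ℕ => C * (4 * ENNReal.ofReal p) ^ (k + 1))
      Filter.atTop (nhds 0) := by
    simpa using ENNReal.Tendsto.const_mul ((ENNReal.tendsto_pow_atTop_nhds_zero_of_lt_one hρ).comp
      (Filter.tendsto_add_atTop_nat 1)) (Or.inr hC)
  exact le_antisymm (ge_of_tendsto' htend hle) bot_le

end MengerSet

theorem menger_proj100_no_interval_general
    (t : Fin 20 → Fin 3 → ℝ) (htinj : Function.Injective t)
    (htrange : Set.range t = mengerVecs)
    (p : ℝ) (hp : p < (0.25 : ℝ))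
    {Ω : Type*} [MeasurableSpace Ω] (P : Measure Ω) [IsProbabilityMeasure P]
    (label : List (Fin 20) → Ω → Bool)
    (hindep : iIndepFun label P)
    (hbern : ∀ w : List (Fin 20), P {ω | label w ω = true} = ENNReal.ofReal p) :
    P {ω | ¬ ∃ x y : ℝ, x < y ∧
      Set.Ioo x y ⊆ proj3 1 0 0 '' mengerSet t label ω} = 1 := by
  have hrat : ∀ᵐ ω ∂P, ∀ a b : ℚ, (a : ℝ) < b →
      ¬ Ioo (a : ℝ) b ⊆ proj3 1 0 0 '' mengerSet t label ω := by
    simp only [ae_all_iff]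
    intro a b hab
    simpa [ae_iff] using
      measure_Ioo_subset_proj_mengerSet_eq_zero htinj htrange hp hindep hbern hab
  have hae : ∀ᵐ ω ∂P, ¬ ∃ x y : ℝ, x < y ∧ Ioo x y ⊆ proj3 1 0 0 '' mengerSet t label ω := by
    filter_upwards [hrat] with ω hω ⟨x, y, hxy, hsub⟩
    obtain ⟨a, hxa, hay⟩ := exists_rat_btwn hxy
    obtain ⟨b, hab, hby⟩ := exists_rat_btwn hay
    exact hω a b hab ((Ioo_subset_Ioo hxa.le hby.le).trans hsub)
  exact (measure_congr (Filter.eventuallyEq_univ.2 hae)).trans measure_univ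

/-- **Theorem.** If `p < 0.25`, then the projection of the random Menger sponge onto the x-axis almost surely contains no nonempty open interval. -/
theorem menger_proj100_no_interval
    (t : Fin 20 → Fin 3 → ℝ) (htinj : Function.Injective t)
    (htrange : Set.range t = mengerVecs)
    (p : ℝ) (hp : p < (0.25 : ℝ))
    {Ω : Type*} [MeasurableSpace Ω] (P : Measure Ω) [IsProbabilityMeasure P]
    (label : List (Fin 20) → Ω → Bool)
    (hmeas : ∀ w, Measurable (label w))
    (hindep : iIndepFun label P)
    (hbern : ∀ w : List (Fin 20), P {ω | label w ω = true} = ENNReal.ofReal p) :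
    P {ω | ¬ ∃ x y : ℝ, x < y ∧
      Set.Ioo x y ⊆ proj3 1 0 0 '' mengerSet t label ω} = 1 :=
  menger_proj100_no_interval_general t htinj htrange p hp P label hindep hbern
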